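/- For all λ > 0 and y > 0, the relative error (e^y - (λy+1)^{1/λ})/(λy+1)^{1/λ} is bounded below by y·(1 - λy/((λy+1)·log(λy+1))), and this lower bound is positive. -/

import Mathlib

/-!
Write `t = λy + 1` and `L = log t`. Then `t ^ (1/λ) = exp (L/λ)`, so the relative error is
`exp (y - L/λ) - 1 > y - L/λ`, where `y - L/λ > 0` because `L < t - 1 = λy`. The claimed lower
bound is `y - (λy)² / (λ t L)`, so it is below `y - L/λ` as soon as `t L² ≤ (t - 1)²`, i.e.
`√t log t ≤ t - 1`; with `√t = exp u` this is `2u ≤ 2 sinh u`. The bound is positive because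
`t - 1 < t log t`.
-/

open Real

lemma sqrt_mul_log_lt_sub_one {t : ℝ} (ht : 1 < t) : √t * log t < t - 1 := by
  set u := log t / 2 with hu
  have hu_pos : 0 < u := by have := log_pos ht; positivity
  have ht0 : 0 < t := zero_lt_one.trans ht
  have hsqrt : √t = exp u := by rw [hu, ← log_sqrt ht0.le, exp_log (sqrt_pos.2 ht0)]
  have hexp : t = exp u * exp u := by rw [← hsqrt, mul_self_sqrt ht0.le]
  calc √t * log t = exp u * (2 * u) := by rw [hsqrt, hu]; ring
    _ < exp u * (2 * sinh u) := by gcongr; exact self_lt_sinh_iff.2 hu_pos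
    _ = t - 1 := by rw [sinh_eq, hexp, exp_neg]; field_simp

lemma mul_log_sq_lt_sq_sub_one {t : ℝ} (ht : 1 < t) : t * log t ^ 2 < (t - 1) ^ 2 := by
  have h := sqrt_mul_log_lt_sub_one ht
  have hpos : 0 ≤ √t * log t := mul_nonneg (sqrt_nonneg t) (log_nonneg ht.le)
  calc t * log t ^ 2 = (√t * log t) ^ 2 := by rw [mul_pow, sq_sqrt (by linarith)]
    _ < (t - 1) ^ 2 := pow_lt_pow_left₀ h hpos two_ne_zero

lemma exp_sub_rpow_div_rpow {t : ℝ} (ht : 0 < t) (y r : ℝ) :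
    (exp y - t ^ r) / t ^ r = exp (y - log t * r) - 1 := by
  rw [rpow_def_of_pos ht, exp_sub]
  field_simp

lemma mul_one_sub_div_le_sub_log_div {l y : ℝ} (hl : 0 < l) (hy : 0 < y) :
    y * (1 - l * y / ((l * y + 1) * log (l * y + 1))) ≤ y - log (l * y + 1) / l := by
  set t := l * y + 1 with ht
  have ht1 : 1 < t := by have := mul_pos hl hy; linarith
  have htL : 0 < t * log t := mul_pos (by linarith) (log_pos ht1)
  have hrewrite : y * (1 - l * y / (t * log t)) = y - (l * y) ^ 2 / (t * log t) / l := by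
    field_simp
  have hkey : log t ≤ (l * y) ^ 2 / (t * log t) := by
    rw [le_div_iff₀ htL, show l * y = t - 1 by linarith]
    nlinarith [mul_log_sq_lt_sq_sub_one ht1]
  rw [hrewrite]
  linarith [div_le_div_of_nonneg_right hkey hl.le]

theorem stmt_2 (l y : ℝ) (hl : 0 < l) (hy : 0 < y) :
    (Real.exp y - (l * y + 1) ^ (1 / l)) / (l * y + 1) ^ (1 / l) >
        y * (1 - l * y / ((l * y + 1) * Real.log (l * y + 1))) ∧
      y * (1 - l * y / ((l * y + 1) * Real.log (l * y + 1))) > 0 := by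
  have hbound := mul_one_sub_div_le_sub_log_div hl hy
  set t := l * y + 1 with ht
  have ht1 : 1 < t := by have := mul_pos hl hy; linarith
  have hly : l * y = t - 1 := by linarith
  have hgap : 0 < y - log t / l := by
    have : log t / l < y := by
      rw [div_lt_iff₀ hl, mul_comm y, hly]
      exact log_lt_sub_one_of_pos (by linarith) ht1.ne'
    linarith
  refine ⟨?_, ?_⟩
  · rw [exp_sub_rpow_div_rpow (by linarith), mul_one_div]
    linarith [add_one_lt_exp hgap.ne']
  · have hlt : l * y / (t * log t) < 1 := by
      rw [div_lt_one (mul_pos (by linarith) (log_pos ht1)), hly]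
      exact self_sub_one_lt_mul_log (by linarith) ht1.ne'
    exact mul_pos hy (by linarith)
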